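/- arXiv:2204.12985 — 2 statements merged into one kernel-verified Lean document; each statement's English description precedes it below -/
import Mathlib

section
/- Functorial model equals permanent model: for any m×m complex matrix U and occupation states I, J ∈ Φ_{m,n}, ⟨J| α U^{⊗n} α† |I⟩ = Perm(U_{I,J}) / √(N_I · N_J), where N_S = ∏_j S_j! and U_{I,J} is the n×n matrix obtained by repeating the i-th row I_i times and the j-th column J_j times. -/
/-!
The amplitude of `α†|I⟩` is the constant `√(N_I/n!)` on the fibre `a⁻¹(I)`, so the left side is
`√(N_I N_J)/n!` times the sum of `∏ᵢ U (Y i) (X i)` over `X ∈ a⁻¹(I)` and `Y ∈ a⁻¹(J)`.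
The fibre `a⁻¹(I)` is the `Sₙ`-orbit of `Xrep`, and each of its points is reached by exactly `N_I`
permutations (a permutation taking `Xrep` to `X` is a choice of bijection inside every mode).
Hence `N_I` times the sum over `X` is the permanent of the matrix with rows indexed by `Y`, and
summing over `Y` in the same way gives `n!` copies of `Perm(U_{I,J})`, because permuting the rows
of a matrix does not change its permanent.
-/

/-- `occVec X j` counts the occurrences of mode `j` in the list `X`. -/
def occVec {n m : ℕ} (X : Fin n → Fin m) : Fin m → ℕ :=
  fun j => (Finset.univ.filter fun i => X i = j).card

/-- The amplitude of the state `α†|I⟩` on the basis list `X`: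
`α†|I⟩ = √(N_I/n!)·Σ_{X ∈ a⁻¹(I)} |X⟩` with `N_I = ∏_j I_j!`. -/
noncomputable def adag {n m : ℕ} (I : Fin m → ℕ) (X : Fin n → Fin m) : ℝ :=
  if occVec X = I then Real.sqrt ((∏ j, (I j).factorial : ℝ) / n.factorial) else 0

/-- The permanent of a square matrix. -/
noncomputable def perm {n : ℕ} (A : Matrix (Fin n) (Fin n) ℂ) : ℂ :=
  ∑ σ : Equiv.Perm (Fin n), ∏ i, A i (σ i)

namespace Equiv.Perm

variable {α β : Type*}

def compEqEquivPiFiberEquiv (X X' : α → β) :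
    {σ : Perm α // X' ∘ σ = X} ≃ ∀ b, ({a // X a = b} ≃ {a // X' a = b}) where
  toFun σ b := σ.1.subtypeEquiv fun a => by rw [← congrFun σ.2 a, Function.comp_apply]
  invFun e :=
    ⟨(Equiv.sigmaFiberEquiv X).symm.trans
        ((Equiv.sigmaCongrRight e).trans (Equiv.sigmaFiberEquiv X')),
      funext fun a => (e (X a) ⟨a, rfl⟩).2⟩
  left_inv _ := rfl
  right_inv e := by
    funext b
    ext ⟨a, rfl⟩
    rfl

variable [Fintype α] [DecidableEq α] [Fintype β] [DecidableEq β]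

theorem card_compEq_of_card_fiber_eq {X X' : α → β}
    (h : ∀ b, Fintype.card {a // X a = b} = Fintype.card {a // X' a = b}) :
    Fintype.card {σ : Perm α // X' ∘ σ = X} = ∏ b, (Fintype.card {a // X' a = b}).factorial := by
  rw [Fintype.card_congr (compEqEquivPiFiberEquiv X X'), Fintype.card_pi]
  exact Finset.prod_congr rfl fun b _ => by
    rw [Fintype.card_equiv (Fintype.equivOfCardEq (h b)), h b]

end Equiv.Perm

section

variable {n m : ℕ}

theorem occVec_eq_card_subtype (X : Fin n → Fin m) (j : Fin m) :
    occVec X j = Fintype.card {i // X i = j} :=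
  (Fintype.card_subtype _).symm

theorem occVec_comp_perm (X : Fin n → Fin m) (σ : Equiv.Perm (Fin n)) :
    occVec (X ∘ σ) = occVec X := by
  funext j
  simp only [occVec_eq_card_subtype]
  exact Fintype.card_congr (σ.subtypeEquiv fun _ => Iff.rfl)

theorem card_perm_comp_eq (X X' : Fin n → Fin m) :
    Fintype.card {σ : Equiv.Perm (Fin n) // X' ∘ σ = X} =
      if occVec X = occVec X' then ∏ j, (occVec X' j).factorial else 0 := by
  split_ifs with h
  · simp only [occVec_eq_card_subtype]
    exact Equiv.Perm.card_compEq_of_card_fiber_eq fun j => by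
      simpa only [occVec_eq_card_subtype] using congrFun h j
  · exact Fintype.card_eq_zero_iff.mpr ⟨fun ⟨σ, hσ⟩ => h (hσ ▸ occVec_comp_perm X' σ)⟩

theorem sum_perm_comp_eq {M : Type*} [AddCommMonoid M] (X' : Fin n → Fin m)
    (g : (Fin n → Fin m) → M) :
    ∑ σ : Equiv.Perm (Fin n), g (X' ∘ σ) =
      (∏ j, (occVec X' j).factorial) • ∑ X with occVec X = occVec X', g X := by
  rw [← Finset.sum_fiberwise' Finset.univ (fun σ : Equiv.Perm (Fin n) => X' ∘ σ) g,
    Finset.smul_sum, Finset.sum_filter]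
  refine Finset.sum_congr rfl fun X _ => ?_
  rw [Finset.sum_const, ← Fintype.card_subtype, card_perm_comp_eq]
  split_ifs <;> simp

theorem perm_eq_permanent (A : Matrix (Fin n) (Fin n) ℂ) : perm A = A.permanent := by
  rw [← Matrix.permanent_transpose]
  rfl

theorem sum_perm_submatrix_left (A : Matrix (Fin n) (Fin n) ℂ) :
    ∑ τ : Equiv.Perm (Fin n), perm (A.submatrix τ id) = n.factorial * perm A := by
  simp only [perm_eq_permanent, Matrix.permanent_permute_cols, Finset.sum_const,
    Finset.card_univ, Fintype.card_perm, Fintype.card_fin, nsmul_eq_mul]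

variable (U : Matrix (Fin m) (Fin m) ℂ)

theorem prod_factorial_mul_sum_fiber_eq_perm (Y Xrep : Fin n → Fin m) :
    (∏ j, ((occVec Xrep j).factorial : ℂ)) * ∑ X with occVec X = occVec Xrep, ∏ i, U (Y i) (X i) =
      perm (Matrix.of fun p q => U (Y p) (Xrep q)) := by
  rw [← Nat.cast_prod, ← nsmul_eq_mul, ← sum_perm_comp_eq Xrep fun X => ∏ i, U (Y i) (X i)]
  rfl

theorem prod_factorial_mul_prod_factorial_mul_sum_fiber_eq (Xrep Yrep : Fin n → Fin m) :
    (∏ j, ((occVec Xrep j).factorial : ℂ)) * (∏ j, ((occVec Yrep j).factorial : ℂ)) *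
        ∑ Y : Fin n → Fin m with occVec Y = occVec Yrep,
          ∑ X : Fin n → Fin m with occVec X = occVec Xrep, ∏ i, U (Y i) (X i) =
      n.factorial * perm (Matrix.of fun p q => U (Yrep p) (Xrep q)) := by
  rw [mul_comm (∏ j, _), mul_assoc, Finset.mul_sum]
  simp only [prod_factorial_mul_sum_fiber_eq_perm]
  rw [← sum_perm_submatrix_left, ← Nat.cast_prod, ← nsmul_eq_mul, ← sum_perm_comp_eq Yrep]
  rfl

theorem sum_adag_mul (I : Fin m → ℕ) (f : (Fin n → Fin m) → ℂ) :
    ∑ X, (adag I X : ℂ) * f X =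
      (Real.sqrt ((∏ j, (I j).factorial : ℝ) / n.factorial) : ℂ) * ∑ X with occVec X = I, f X := by
  rw [Finset.sum_filter, Finset.mul_sum]
  refine Finset.sum_congr rfl fun X _ => ?_
  unfold adag
  split_ifs <;> simp

theorem sqrt_div_mul_sqrt_div_mul_of_mul_eq {a b k : ℝ} (ha : 0 < a) (hb : 0 < b) (hk : 0 < k)
    {S P : ℂ} (h : (a * b : ℂ) * S = k * P) :
    (Real.sqrt (b / k) : ℂ) * Real.sqrt (a / k) * S = P / Real.sqrt (a * b) := by
  have hsqrt : Real.sqrt (b / k) * Real.sqrt (a / k) = Real.sqrt (a * b) / k := by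
    rw [← Real.sqrt_mul (by positivity), div_mul_div_comm, mul_comm b,
      Real.sqrt_div' _ (by positivity), Real.sqrt_mul_self hk.le]
  have hab : (Real.sqrt (a * b) : ℂ) ^ 2 = a * b := by
    rw [← Complex.ofReal_pow, Real.sq_sqrt (by positivity)]; push_cast; ring
  have hk' : (k : ℂ) ≠ 0 := by exact_mod_cast hk.ne'
  have hs : (Real.sqrt (a * b) : ℂ) ≠ 0 := by exact_mod_cast (Real.sqrt_pos.mpr (by positivity)).ne'
  rw [← Complex.ofReal_mul, hsqrt, Complex.ofReal_div]
  field_simp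
  linear_combination S * hab + h

end

theorem functorial_eq_permanent_model_general {n m : ℕ} (U : Matrix (Fin m) (Fin m) ℂ)
    (I J : Fin m → ℕ)
    (Xrep Yrep : Fin n → Fin m) (hX : occVec Xrep = I) (hY : occVec Yrep = J) :
    ∑ Y : Fin n → Fin m, ∑ X : Fin n → Fin m,
        (adag J Y : ℂ) * (adag I X : ℂ) * ∏ i, U (Y i) (X i) =
      perm (Matrix.of fun p q => U (Yrep p) (Xrep q)) /
        Real.sqrt ((∏ j, (I j).factorial : ℝ) * (∏ j, (J j).factorial : ℝ)) := by
  subst hX hY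
  calc _ = ∑ Y : Fin n → Fin m, (adag (occVec Yrep) Y : ℂ) *
          ∑ X : Fin n → Fin m, (adag (occVec Xrep) X : ℂ) * ∏ i, U (Y i) (X i) := by
        simp only [mul_assoc, Finset.mul_sum]
    _ = (Real.sqrt ((∏ j, (occVec Yrep j).factorial : ℝ) / n.factorial) : ℂ) *
          Real.sqrt ((∏ j, (occVec Xrep j).factorial : ℝ) / n.factorial) *
          ∑ Y : Fin n → Fin m with occVec Y = occVec Yrep,
            ∑ X : Fin n → Fin m with occVec X = occVec Xrep, ∏ i, U (Y i) (X i) := by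
        simp only [sum_adag_mul]
        rw [← Finset.mul_sum, mul_assoc]
    _ = _ := by
        refine sqrt_div_mul_sqrt_div_mul_of_mul_eq (by positivity) (by positivity) (by positivity) ?_
        push_cast
        exact prod_factorial_mul_prod_factorial_mul_sum_fiber_eq U Xrep Yrep

/-- Functorial model equals permanent model:
`⟨J| α U^{⊗n} α† |I⟩ = Perm(U_{I,J}) / √(N_I · N_J)`, where `U^{⊗n}` has matrix elements
`⟨Y| U^{⊗n} |X⟩ = ∏_i U (Y i) (X i)`, `N_S = ∏_j S_j!`, and `U_{I,J}` is built from
representatives `Xrep ∈ a⁻¹(I)`, `Yrep ∈ a⁻¹(J)` by `(U_{I,J})_{pq} = U (Yrep p) (Xrep q)`. -/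
theorem functorial_eq_permanent_model {n m : ℕ} (U : Matrix (Fin m) (Fin m) ℂ)
    (I J : Fin m → ℕ) (hI : ∑ j, I j = n) (hJ : ∑ j, J j = n)
    (Xrep Yrep : Fin n → Fin m) (hX : occVec Xrep = I) (hY : occVec Yrep = J) :
    ∑ Y : Fin n → Fin m, ∑ X : Fin n → Fin m,
        (adag J Y : ℂ) * (adag I X : ℂ) * ∏ i, U (Y i) (X i) =
      perm (Matrix.of fun p q => U (Yrep p) (Xrep q)) /
        Real.sqrt ((∏ j, (I j).factorial : ℝ) * (∏ j, (J j).factorial : ℝ)) :=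
  functorial_eq_permanent_model_general U I J Xrep Yrep hX hY
end

section
/- The bosonic copy map δ and its adjoint μ = δ† satisfy the bialgebra law: δ ∘ μ = (μ ⊗ μ) ∘ (id ⊗ swap ⊗ id) ∘ (δ ⊗ δ) as maps ℓ²(ℕ) ⊗ ℓ²(ℕ) → ℓ²(ℕ) ⊗ ℓ²(ℕ) (on the dense span of basis vectors). -/
open Finsupp

/-- The bosonic comultiplication `δ|n⟩ = Σ_{k=0}^n √C(n,k) |k⟩⊗|n−k⟩`. -/
noncomputable def deltaMap : (ℕ →₀ ℂ) →ₗ[ℂ] (ℕ × ℕ →₀ ℂ) :=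
  Finsupp.lsum ℂ fun n =>
    ∑ k ∈ Finset.range (n + 1), (Real.sqrt (n.choose k) : ℂ) • Finsupp.lsingle (k, n - k)

/-- The multiplication `μ = δ†`, `μ(|a⟩⊗|b⟩) = √C(a+b,a) |a+b⟩`. -/
noncomputable def muMap : (ℕ × ℕ →₀ ℂ) →ₗ[ℂ] (ℕ →₀ ℂ) :=
  Finsupp.lsum ℂ fun q =>
    (Real.sqrt ((q.1 + q.2).choose q.1) : ℂ) • Finsupp.lsingle (q.1 + q.2)

/-- `δ ⊗ δ` on two tensor factors. -/
noncomputable def deltaTensorDelta : (ℕ × ℕ →₀ ℂ) →ₗ[ℂ] ((ℕ × ℕ) × (ℕ × ℕ) →₀ ℂ) :=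
  Finsupp.lsum ℂ fun q =>
    ∑ k ∈ Finset.range (q.1 + 1), ∑ p ∈ Finset.range (q.2 + 1),
      ((Real.sqrt (q.1.choose k) : ℂ) * (Real.sqrt (q.2.choose p) : ℂ)) •
        Finsupp.lsingle ((k, q.1 - k), (p, q.2 - p))

/-- `id ⊗ swap ⊗ id`, exchanging the two middle tensor factors. -/
noncomputable def midSwap : ((ℕ × ℕ) × (ℕ × ℕ) →₀ ℂ) →ₗ[ℂ] ((ℕ × ℕ) × (ℕ × ℕ) →₀ ℂ) :=
  Finsupp.lmapDomain ℂ ℂ fun q => ((q.1.1, q.2.1), (q.1.2, q.2.2))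

/-- `μ ⊗ μ` on two pairs of tensor factors. -/
noncomputable def muTensorMu : ((ℕ × ℕ) × (ℕ × ℕ) →₀ ℂ) →ₗ[ℂ] (ℕ × ℕ →₀ ℂ) :=
  Finsupp.lsum ℂ fun q =>
    ((Real.sqrt ((q.1.1 + q.1.2).choose q.1.1) : ℂ) *
      (Real.sqrt ((q.2.1 + q.2.2).choose q.2.1) : ℂ)) •
        Finsupp.lsingle (q.1.1 + q.1.2, q.2.1 + q.2.2)

lemma key_real (a b k p : ℕ) (hk : k ≤ a) (hp : p ≤ b) :
    (((a+b).choose (k+p) : ℝ)) * ((((k+p).choose k : ℕ) : ℝ) * (((a-k+(b-p)).choose (a-k) : ℕ) : ℝ))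
      = (((a+b).choose a : ℕ) : ℝ) * (((a.choose k : ℕ) : ℝ) * ((b.choose p : ℕ) : ℝ)) := by
  have h1 : k + p ≤ a + b := by omega
  rw [show a - k + (b - p) = a + b - (k + p) by omega]
  rw [Nat.cast_choose ℝ h1, Nat.cast_choose ℝ (Nat.le_add_right k p),
    Nat.cast_choose ℝ (show a - k ≤ a + b - (k + p) by omega), Nat.cast_choose ℝ hk,
    Nat.cast_choose ℝ hp, Nat.cast_choose ℝ (Nat.le_add_right a b)]
  rw [show k + p - k = p by omega, show a + b - (k + p) - (a - k) = b - p by omega,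
    show a + b - a = b by omega]
  rw [div_mul_div_comm, div_mul_div_comm, div_mul_div_comm, div_mul_div_comm,
    div_eq_div_iff (by positivity) (by positivity)]
  ring

lemma sqrt_key (a b k p : ℕ) (hk : k ≤ a) (hp : p ≤ b) :
    Real.sqrt (a.choose k) * Real.sqrt (b.choose p) *
      (Real.sqrt ((k+p).choose k) * Real.sqrt ((a-k+(b-p)).choose (a-k)))
    = Real.sqrt ((a+b).choose a) * Real.sqrt ((a+b).choose (k+p)) *
      (((a.choose k : ℕ) : ℝ) * ((b.choose p : ℕ) : ℝ) / (((a+b).choose (k+p) : ℕ) : ℝ)) := by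
  have h1 : k + p ≤ a + b := by omega
  have hCn : (0:ℝ) < (((a+b).choose (k+p) : ℕ) : ℝ) :=
    Nat.cast_pos.mpr (Nat.choose_pos h1)
  have hA : (0:ℝ) ≤ ((a.choose k : ℕ) : ℝ) := Nat.cast_nonneg _
  have hq : (0:ℝ) ≤ ((a.choose k : ℕ) : ℝ) * ((b.choose p : ℕ) : ℝ) / (((a+b).choose (k+p) : ℕ) : ℝ) :=
    div_nonneg (mul_nonneg hA (Nat.cast_nonneg _)) hCn.le
  rw [← Real.sqrt_mul hA, ← Real.sqrt_mul (Nat.cast_nonneg _),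
    ← Real.sqrt_mul (Nat.cast_nonneg _), ← Real.sqrt_sq hq,
    ← Real.sqrt_mul (by positivity), ← Real.sqrt_mul (by positivity)]
  congr 1
  field_simp
  linear_combination (((a.choose k : ℕ) : ℝ) * ((b.choose p : ℕ) : ℝ)) * key_real a b k p hk hp

lemma vand (a b n : ℕ) :
    ∑ q ∈ (Finset.range (a+1) ×ˢ Finset.range (b+1)).filter (fun q => q.1 + q.2 = n),
      a.choose q.1 * b.choose q.2 = (a+b).choose n := by
  rw [Nat.add_choose_eq]
  apply Finset.sum_subset
  · intro q hq
    simp only [Finset.mem_filter, Finset.mem_product, Finset.mem_range] at hq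
    simp only [Finset.HasAntidiagonal.mem_antidiagonal]
    exact hq.2
  · intro q hq hnq
    simp only [Finset.HasAntidiagonal.mem_antidiagonal] at hq
    simp only [Finset.mem_filter, Finset.mem_product, Finset.mem_range] at hnq
    have : a < q.1 ∨ b < q.2 := by omega
    rcases this with h | h
    · rw [Nat.choose_eq_zero_of_lt h, zero_mul]
    · rw [Nat.choose_eq_zero_of_lt h, mul_zero]

/-- The bialgebra law: `δ ∘ μ = (μ ⊗ μ) ∘ (id ⊗ swap ⊗ id) ∘ (δ ⊗ δ)`. -/
theorem bosonic_bialgebra :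
    deltaMap ∘ₗ muMap = muTensorMu ∘ₗ midSwap ∘ₗ deltaTensorDelta := by
  apply Finsupp.lhom_ext
  rintro ⟨a, b⟩ c
  simp only [deltaMap, muMap, muTensorMu, midSwap, deltaTensorDelta,
    LinearMap.comp_apply, Finsupp.lsum_single, LinearMap.sum_apply, LinearMap.smul_apply,
    Finsupp.lsingle_apply, map_sum, map_smul, Finsupp.lmapDomain_apply, Finsupp.mapDomain_single]
  rw [Finset.smul_sum, ← Finset.sum_product']
  rw [← Finset.sum_fiberwise_of_maps_to (g := fun q : ℕ × ℕ => q.1 + q.2)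
    (t := Finset.range (a + b + 1))
    (fun q hq => by
      simp only [Finset.mem_product, Finset.mem_range] at hq ⊢; omega)]
  refine Finset.sum_congr rfl fun n hn => ?_
  simp only [Finset.mem_range] at hn
  have hn' : n ≤ a + b := by omega
  have hCn : (((a+b).choose n : ℕ) : ℂ) ≠ 0 := by
    exact_mod_cast (Nat.choose_pos hn').ne'
  calc ((Real.sqrt ((a+b).choose a) : ℂ)) • ((Real.sqrt ((a+b).choose n) : ℂ)) •
          (Finsupp.single (n, a + b - n) c)
      = ∑ q ∈ (Finset.range (a+1) ×ˢ Finset.range (b+1)).filter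
            (fun q => q.1 + q.2 = n),
          (((Real.sqrt ((a+b).choose a) * Real.sqrt ((a+b).choose n) : ℝ) : ℂ) *
            (((a.choose q.1 * b.choose q.2 : ℕ) : ℂ) / (((a+b).choose n : ℕ) : ℂ))) •
          (Finsupp.single (n, a + b - n) c) := by
        rw [← Finset.sum_smul, smul_smul]
        congr 1
        rw [← Finset.mul_sum, ← Finset.sum_div]
        have : ∑ q ∈ (Finset.range (a+1) ×ˢ Finset.range (b+1)).filter
            (fun q => q.1 + q.2 = n), ((a.choose q.1 * b.choose q.2 : ℕ) : ℂ)
            = (((a+b).choose n : ℕ) : ℂ) := by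
          rw [← Nat.cast_sum]
          exact_mod_cast congrArg (Nat.cast (R := ℂ)) (vand a b n)
        rw [this, div_self hCn, mul_one, Complex.ofReal_mul]
    _ = ∑ q ∈ (Finset.range (a+1) ×ˢ Finset.range (b+1)).filter
            (fun q => q.1 + q.2 = n),
          ((Real.sqrt (a.choose q.1) : ℂ) * (Real.sqrt (b.choose q.2) : ℂ)) •
          ((Real.sqrt ((q.1 + q.2).choose q.1) : ℂ) *
            (Real.sqrt ((a - q.1 + (b - q.2)).choose (a - q.1)) : ℂ)) •
          (Finsupp.single (q.1 + q.2, a - q.1 + (b - q.2)) c) := by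
        refine Finset.sum_congr rfl fun q hq => ?_
        simp only [Finset.mem_filter, Finset.mem_product, Finset.mem_range] at hq
        obtain ⟨⟨hq1, hq2⟩, hqn⟩ := hq
        have h1 : q.1 ≤ a := by omega
        have h2 : q.2 ≤ b := by omega
        rw [smul_smul]
        have hpair : (q.1 + q.2, a - q.1 + (b - q.2)) = (n, a + b - n) := by
          rw [hqn, show a - q.1 + (b - q.2) = a + b - n by omega]
        rw [hpair]
        congr 1
        have h0 := sqrt_key a b q.1 q.2 h1 h2
        rw [hqn] at h0
        have h := congrArg (fun r : ℝ => (r : ℂ)) h0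
        push_cast at h ⊢
        rw [hqn]
        linear_combination -h
end
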